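/- arXiv:math/0508482 — 6 statements merged into one kernel-verified Lean document; each statement's English description precedes it below -/
import Mathlib

section
/- Let A be a self-adjoint n×n complex matrix with eigenvalues λ₁ ≥ ⋯ ≥ λₙ (with multiplicity) and diagonal entries p₁ ≥ ⋯ ≥ pₙ, both listed in decreasing order. Then p₁ + ⋯ + p_k ≤ λ₁ + ⋯ + λ_k for every 1 ≤ k ≤ n, with equality when k = n. -/
/-!
Writing `A = U diag(λ) Uᴴ` with `U` unitary gives `A i i = ∑ j, ‖U i j‖² λ j`, and the matrix
`(‖U i j‖²)` is doubly stochastic. So a sum of `k` diagonal entries is `∑ j, t j λ j` with weights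
`0 ≤ t j ≤ 1` of total mass `k`; comparing each term with the threshold `λ k` shows that such a
sum is largest when the whole mass sits on the `k` largest eigenvalues.
-/

open Finset Matrix

section
variable {ι R : Type*} [Fintype ι] [CommRing R] [PartialOrder R] [IsOrderedRing R]

theorem sum_mul_le_sum_of_le_one_of_threshold (S : Finset ι) {t x : ι → R} {c : R}
    (ht₀ : ∀ j, 0 ≤ t j) (ht₁ : ∀ j, t j ≤ 1) (ht : ∑ j, t j = #S)
    (hS : ∀ j ∈ S, c ≤ x j) (hSc : ∀ j ∉ S, x j ≤ c) :
    ∑ j, t j * x j ≤ ∑ j ∈ S, x j := by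
  classical
  have hterm : ∀ j, (t j - if j ∈ S then 1 else 0) * (x j - c) ≤ 0 := by
    intro j
    by_cases hj : j ∈ S
    · simpa [hj] using
        mul_nonpos_of_nonpos_of_nonneg (sub_nonpos.2 (ht₁ j)) (sub_nonneg.2 (hS j hj))
    · simpa [hj] using mul_nonpos_of_nonneg_of_nonpos (ht₀ j) (sub_nonpos.2 (hSc j hj))
  have hsum := sum_nonpos fun j (_ : j ∈ univ) => hterm j
  simp only [sub_mul, ite_mul, one_mul, zero_mul, sum_sub_distrib, ← sum_mul, sum_ite_mem,
    univ_inter, mul_sub, ht, sum_const, nsmul_eq_mul, sub_self, sub_zero, sub_nonpos] at hsum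
  exact hsum

theorem sum_mulVec_le_of_mem_doublyStochastic [DecidableEq ι] {D : Matrix ι ι R}
    (hD : D ∈ doublyStochastic R ι) (I S : Finset ι) (hIS : #I = #S) {x : ι → R} {c : R}
    (hS : ∀ j ∈ S, c ≤ x j) (hSc : ∀ j ∉ S, x j ≤ c) :
    ∑ i ∈ I, (D *ᵥ x) i ≤ ∑ j ∈ S, x j := by
  have hcol : ∀ j, ∑ i ∈ I, D i j ≤ 1 := fun j =>
    (sum_le_univ_sum_of_nonneg fun i => nonneg_of_mem_doublyStochastic hD).trans_eq
      (sum_col_of_mem_doublyStochastic hD j)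
  have hmass : ∑ j, ∑ i ∈ I, D i j = #S := by
    rw [sum_comm, sum_congr rfl fun i _ => sum_row_of_mem_doublyStochastic hD i, sum_const,
      nsmul_one, hIS]
  calc ∑ i ∈ I, (D *ᵥ x) i = ∑ j, (∑ i ∈ I, D i j) * x j := by
        simp only [mulVec, dotProduct, sum_mul]; exact sum_comm
    _ ≤ ∑ j ∈ S, x j := sum_mul_le_sum_of_le_one_of_threshold S
        (fun j => sum_nonneg fun i _ => nonneg_of_mem_doublyStochastic hD) hcol hmass hS hSc

end

theorem sum_mulVec_le_sum_filter_lt_of_antitone {R : Type*} [CommRing R] [PartialOrder R]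
    [IsOrderedRing R] {n : ℕ} {D : Matrix (Fin n) (Fin n) R} (hD : D ∈ doublyStochastic R (Fin n))
    {x : Fin n → R} (hx : Antitone x) (I : Finset (Fin n)) :
    ∑ i ∈ I, (D *ᵥ x) i ≤ ∑ i ∈ univ.filter (fun i : Fin n => (i : ℕ) < #I), x i := by
  rcases (card_le_univ I).lt_or_eq with hI | hI
  · rw [Fintype.card_fin] at hI
    refine sum_mulVec_le_of_mem_doublyStochastic hD I _ ?_ (c := x ⟨#I, hI⟩) ?_ ?_
    · rw [Fin.card_filter_val_lt, min_eq_right hI.le]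
    · intro j hj
      exact hx (Fin.le_def.2 (mem_filter.1 hj).2.le)
    · intro j hj
      exact hx (Fin.le_def.2 (not_lt.1 fun h => hj (mem_filter.2 ⟨mem_univ _, h⟩)))
  · rw [eq_univ_of_card I hI, sum_mulVec_of_mem_doublyStochastic hD, card_univ, Fintype.card_fin,
      filter_true_of_mem fun i _ => i.is_lt]

namespace Matrix
variable {𝕜 n : Type*} [RCLike 𝕜] [Fintype n] [DecidableEq n]

theorem norm_sq_mem_doublyStochastic_of_mem_unitaryGroup {U : Matrix n n 𝕜}
    (hU : U ∈ unitaryGroup n 𝕜) : (of fun i j => ‖U i j‖ ^ 2) ∈ doublyStochastic ℝ n := by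
  rw [mem_doublyStochastic_iff_sum]
  refine ⟨fun i j => sq_nonneg _, fun i => ?_, fun j => ?_⟩
  · have := congr_fun₂ (mem_unitaryGroup_iff.1 hU) i i
    simp only [mul_apply, star_apply, RCLike.star_def, RCLike.mul_conj, one_apply_eq] at this
    exact_mod_cast this
  · have := congr_fun₂ (mem_unitaryGroup_iff'.1 hU) j j
    simp only [mul_apply, star_apply, RCLike.star_def, RCLike.conj_mul, one_apply_eq] at this
    exact_mod_cast this

theorem IsHermitian.apply_self_eq_mulVec_eigenvalues {A : Matrix n n 𝕜} (hA : A.IsHermitian)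
    (i : n) :
    A i i = (((of fun i j => ‖(hA.eigenvectorUnitary : Matrix n n 𝕜) i j‖ ^ 2) *ᵥ
      hA.eigenvalues) i : ℝ) := by
  conv_lhs => rw [hA.spectral_theorem, Unitary.conjStarAlgAut_apply]
  rw [mul_apply]
  simp only [mul_diagonal, star_apply, mulVec, dotProduct, RCLike.star_def, Function.comp_apply,
    of_apply]
  push_cast
  refine sum_congr rfl fun j _ => ?_
  rw [mul_right_comm, RCLike.mul_conj]

end Matrix

theorem schur_theorem_general (n : ℕ) (A : Matrix (Fin n) (Fin n) ℂ) (hA : A.IsHermitian)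
    (lam p : Fin n → ℝ) (hlam : Antitone lam)
    (hlamA : ∃ σ : Equiv.Perm (Fin n), ∀ i, lam i = hA.eigenvalues (σ i))
    (hpA : ∃ σ : Equiv.Perm (Fin n), ∀ i, (p i : ℂ) = A (σ i) (σ i)) :
    (∀ k : ℕ, k ≤ n →
      ∑ i ∈ Finset.univ.filter (fun i : Fin n => (i : ℕ) < k), p i ≤
      ∑ i ∈ Finset.univ.filter (fun i : Fin n => (i : ℕ) < k), lam i) ∧
    ∑ i, p i = ∑ i, lam i := by
  obtain ⟨σl, hσl⟩ := hlamA
  obtain ⟨σp, hσp⟩ := hpA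
  set D := (of fun i j => ‖(hA.eigenvectorUnitary : Matrix (Fin n) (Fin n) ℂ) i j‖ ^ 2).submatrix
    σp σl
  have hD : D ∈ doublyStochastic ℝ (Fin n) :=
    reindex_mem_doublyStochastic (e₁ := σp.symm) (e₂ := σl.symm)
      (norm_sq_mem_doublyStochastic_of_mem_unitaryGroup hA.eigenvectorUnitary.2)
  have hpD : p = D *ᵥ lam := by
    have hμ : lam ∘ σl.symm = hA.eigenvalues := funext fun j => by simp [hσl]
    ext i
    rw [submatrix_mulVec_equiv, hμ]
    exact Complex.ofReal_injective ((hσp i).trans (hA.apply_self_eq_mulVec_eigenvalues (σp i)))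
  refine ⟨fun k hk => ?_, hpD ▸ sum_mulVec_of_mem_doublyStochastic hD⟩
  have hcard : #(univ.filter fun i : Fin n => (i : ℕ) < k) = k := by
    rw [Fin.card_filter_val_lt, min_eq_right hk]
  simpa only [hpD, hcard] using sum_mulVec_le_sum_filter_lt_of_antitone hD hlam
    (univ.filter fun i : Fin n => (i : ℕ) < k)

/-- **Schur's theorem**: the decreasingly ordered diagonal `p` of a Hermitian matrix
is majorized by its decreasingly ordered eigenvalue list `lam`. -/
theorem schur_theorem (n : ℕ) (A : Matrix (Fin n) (Fin n) ℂ) (hA : A.IsHermitian)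
    (lam p : Fin n → ℝ) (hlam : Antitone lam) (hp : Antitone p)
    (hlamA : ∃ σ : Equiv.Perm (Fin n), ∀ i, lam i = hA.eigenvalues (σ i))
    (hpA : ∃ σ : Equiv.Perm (Fin n), ∀ i, (p i : ℂ) = A (σ i) (σ i)) :
    (∀ k : ℕ, k ≤ n →
      ∑ i ∈ Finset.univ.filter (fun i : Fin n => (i : ℕ) < k), p i ≤
      ∑ i ∈ Finset.univ.filter (fun i : Fin n => (i : ℕ) < k), lam i) ∧
    ∑ i, p i = ∑ i, lam i :=
  schur_theorem_general n A hA lam p hlam hlamA hpA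
end

section
/- Let p = (p₁, …, pₙ) and λ = (λ₁, …, λₙ) be decreasing sequences of nonnegative real numbers satisfying p₁ + ⋯ + p_k ≤ λ₁ + ⋯ + λ_k for k = 1, …, n. Then there exists a decreasing sequence μ = (μ₁, …, μₙ) with 0 ≤ μ_k ≤ λ_k and p₁ + ⋯ + p_k ≤ μ₁ + ⋯ + μ_k for every 1 ≤ k ≤ n, and with p₁ + ⋯ + pₙ = μ₁ + ⋯ + μₙ. -/
/-!
Cap the partial sums `Λₖ = λ₁ + ⋯ + λₖ` at the total `C = p₁ + ⋯ + pₙ` and let `μ` be the sequence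
whose partial sums are `min Λₖ C`. Its partial sums dominate
those of `p` (each of which is at most both `Λₖ` and `C`), it sums to `min Λₙ C = C`, and
`0 ≤ μₖ ≤ λₖ` because `min · C` is monotone and 1-Lipschitz. Since `min · C` is concave, its
increments along the increasing sequence `Λ` with decreasing steps `λ` decrease, so `μ` is
decreasing.
-/

open Finset

def partialSum {M : Type*} [AddCommMonoid M] {n : ℕ} (f : Fin n → M) (k : ℕ) : M :=
  ∑ i ∈ univ.filter (fun i : Fin n => (i : ℕ) < k), f i

section PartialSum

variable {M : Type*} {n : ℕ}

section AddCommMonoid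

variable [AddCommMonoid M] (f : Fin n → M)

@[simp]
theorem partialSum_zero : partialSum f 0 = 0 := by
  simp [partialSum]

theorem partialSum_succ {k : ℕ} (hk : k < n) :
    partialSum f (k + 1) = partialSum f k + f ⟨k, hk⟩ := by
  have hset : univ.filter (fun i : Fin n => (i : ℕ) < k + 1) =
      insert ⟨k, hk⟩ (univ.filter fun i : Fin n => (i : ℕ) < k) := by
    ext i
    simp only [mem_filter, mem_univ, true_and, mem_insert, Fin.ext_iff]
    omega
  rw [partialSum, hset, sum_insert (by simp), add_comm]
  rfl

theorem partialSum_of_le {k : ℕ} (hk : n ≤ k) : partialSum f k = ∑ i, f i := by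
  rw [partialSum, filter_true_of_mem fun i _ => i.isLt.trans_le hk]

end AddCommMonoid

theorem partialSum_sub [AddCommGroup M] (g : ℕ → M) {k : ℕ} (hk : k ≤ n) :
    partialSum (fun i : Fin n => g (i + 1) - g i) k = g k - g 0 := by
  induction k with
  | zero => simp
  | succ k ih =>
    rw [partialSum_succ _ hk, ih (Nat.le_of_succ_le hk)]
    abel

variable [AddCommMonoid M] [PartialOrder M] [IsOrderedAddMonoid M] {f : Fin n → M}

theorem partialSum_mono (hf : 0 ≤ f) : Monotone (partialSum f) :=
  fun _ _ hkl => sum_le_sum_of_subset_of_nonneg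
    (fun i hi => mem_filter.2 ⟨mem_univ i, (mem_filter.1 hi).2.trans_le hkl⟩) fun i _ _ => hf i

theorem partialSum_le_sum (hf : 0 ≤ f) (k : ℕ) : partialSum f k ≤ ∑ i, f i :=
  sum_le_sum_of_subset_of_nonneg (filter_subset _ _) fun i _ _ => hf i

end PartialSum

theorem min_add_sub_min_le {a l : ℝ} (C : ℝ) (hl : 0 ≤ l) : min (a + l) C - min a C ≤ l := by
  simp only [min_def]
  split_ifs <;> linarith

theorem min_sub_min_le_min_sub_min {a a' b b' : ℝ} (C : ℝ) (hab : a ≤ b) (hbb' : b ≤ b')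
    (hstep : b' - b ≤ a' - a) : min b' C - min b C ≤ min a' C - min a C := by
  simp only [min_def]
  split_ifs <;> linarith

noncomputable def capPartialSums {n : ℕ} (lam : Fin n → ℝ) (C : ℝ) (i : Fin n) : ℝ :=
  min (partialSum lam ((i : ℕ) + 1)) C - min (partialSum lam i) C

section CapPartialSums

variable {n : ℕ} {lam : Fin n → ℝ} {C : ℝ}

theorem partialSum_capPartialSums (hC : 0 ≤ C) {k : ℕ} (hk : k ≤ n) :
    partialSum (capPartialSums lam C) k = min (partialSum lam k) C := by
  calc partialSum (capPartialSums lam C) k = min (partialSum lam k) C - min (partialSum lam 0) C :=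
        partialSum_sub (fun j => min (partialSum lam j) C) hk
    _ = min (partialSum lam k) C := by simp [hC]

theorem capPartialSums_nonneg (hlam : 0 ≤ lam) (i : Fin n) : 0 ≤ capPartialSums lam C i :=
  sub_nonneg.2 <| min_le_min_right _ <| partialSum_mono hlam (Nat.le_succ _)

theorem capPartialSums_le (hlam : 0 ≤ lam) (i : Fin n) : capPartialSums lam C i ≤ lam i := by
  rw [capPartialSums, partialSum_succ _ i.isLt]
  exact min_add_sub_min_le C (hlam i)

theorem capPartialSums_antitone (hlam : Antitone lam) (hlam0 : 0 ≤ lam) :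
    Antitone (capPartialSums lam C) := by
  intro i j hij
  rw [capPartialSums, capPartialSums, partialSum_succ _ i.isLt, partialSum_succ _ j.isLt]
  refine min_sub_min_le_min_sub_min C (partialSum_mono hlam0 hij)
    (le_add_of_nonneg_right (hlam0 _)) ?_
  simpa using hlam hij

end CapPartialSums

theorem reduce_eigenvalue_list_general (n : ℕ) (p lam : Fin n → ℝ)
    (hlam : Antitone lam)
    (hp0 : ∀ i, 0 ≤ p i) (hlam0 : ∀ i, 0 ≤ lam i)
    (hineq : ∀ k : ℕ, k ≤ n →
      ∑ i ∈ Finset.univ.filter (fun i : Fin n => (i : ℕ) < k), p i ≤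
      ∑ i ∈ Finset.univ.filter (fun i : Fin n => (i : ℕ) < k), lam i) :
    ∃ mu : Fin n → ℝ, Antitone mu ∧
      (∀ i, 0 ≤ mu i ∧ mu i ≤ lam i) ∧
      (∀ k : ℕ, k ≤ n →
        ∑ i ∈ Finset.univ.filter (fun i : Fin n => (i : ℕ) < k), p i ≤
        ∑ i ∈ Finset.univ.filter (fun i : Fin n => (i : ℕ) < k), mu i) ∧
      ∑ i, p i = ∑ i, mu i := by
  have hC : 0 ≤ ∑ i, p i := sum_nonneg fun i _ => hp0 i
  refine ⟨capPartialSums lam (∑ i, p i), capPartialSums_antitone hlam hlam0,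
    fun i => ⟨capPartialSums_nonneg hlam0 i, capPartialSums_le hlam0 i⟩, fun k hk => ?_, ?_⟩
  · change partialSum p k ≤ partialSum _ k
    rw [partialSum_capPartialSums hC hk]
    exact le_min (hineq k hk) (partialSum_le_sum hp0 k)
  · have htotal : ∑ i, p i ≤ partialSum lam n :=
      (partialSum_of_le p le_rfl).symm.trans_le (hineq n le_rfl)
    rw [← partialSum_of_le (capPartialSums lam _) le_rfl, partialSum_capPartialSums hC le_rfl,
      min_eq_right htotal]

/-- Lemma 1: given decreasing nonnegative `p`, `lam` with the partial sums of `p`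
dominated by those of `lam`, the entries of `lam` can be reduced to a decreasing
sequence `mu` with `0 ≤ mu k ≤ lam k`, preserving the partial sum inequalities,
and with total sums of `p` and `mu` equal. -/
theorem reduce_eigenvalue_list (n : ℕ) (p lam : Fin n → ℝ)
    (hp : Antitone p) (hlam : Antitone lam)
    (hp0 : ∀ i, 0 ≤ p i) (hlam0 : ∀ i, 0 ≤ lam i)
    (hineq : ∀ k : ℕ, k ≤ n →
      ∑ i ∈ Finset.univ.filter (fun i : Fin n => (i : ℕ) < k), p i ≤
      ∑ i ∈ Finset.univ.filter (fun i : Fin n => (i : ℕ) < k), lam i) :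
    ∃ mu : Fin n → ℝ, Antitone mu ∧
      (∀ i, 0 ≤ mu i ∧ mu i ≤ lam i) ∧
      (∀ k : ℕ, k ≤ n →
        ∑ i ∈ Finset.univ.filter (fun i : Fin n => (i : ℕ) < k), p i ≤
        ∑ i ∈ Finset.univ.filter (fun i : Fin n => (i : ℕ) < k), mu i) ∧
      ∑ i, p i = ∑ i, mu i :=
  reduce_eigenvalue_list_general n p lam hlam hp0 hlam0 hineq
end

section
/- Let H be a separable Hilbert space with orthonormal basis (eₖ), let A be a positive compact operator with eigenvalue list λ₁ ≥ λ₂ ≥ ⋯, and suppose L is a contraction on H such that ⟨L*ALeₖ, eₖ⟩ = pₖ where p₁ ≥ p₂ ≥ ⋯ ≥ 0. Then p₁ + ⋯ + pₙ ≤ λ₁ + ⋯ + λₙ for every n ≥ 1. -/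
/-
Expanding `⟪e k, L* A L e k⟫` in the eigenbasis of `A` gives `p k = ∑ⱼ λⱼ cⱼₖ` with
`cⱼₖ = ‖⟪ξ j, L e k⟫‖²`. The matrix `c` is doubly substochastic: its columns sum to at most
`‖L e k‖² ≤ 1` and, by Bessel's inequality for `L* ξ j`, its rows do too. Hence the weights
`tⱼ = ∑_{k<n} cⱼₖ` lie in `[0, 1]` and have total mass at most `n`, and for a decreasing
nonnegative `λ` such weights give `∑ⱼ λⱼ tⱼ ≤ λ₀ + ⋯ + λₙ₋₁`.
-/

open scoped InnerProductSpace
open Finset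

section Hilbert

variable {𝕜 E ι : Type*} [RCLike 𝕜] [NormedAddCommGroup E] [InnerProductSpace 𝕜 E]

theorem Orthonormal.summable_smul_inner_smul [CompleteSpace E] [Module ℝ E]
    [IsScalarTower ℝ 𝕜 E] {ξ : ι → E} (hξ : Orthonormal 𝕜 ξ) {lam : ι → ℝ} {C : ℝ}
    (hlam : ∀ j, |lam j| ≤ C) (x : E) :
    Summable fun j => lam j • (⟪ξ j, x⟫_𝕜 • ξ j) := by
  have hsq : Summable fun j => ‖(lam j : 𝕜) * ⟪ξ j, x⟫_𝕜‖ ^ 2 := by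
    refine .of_nonneg_of_le (fun j => by positivity) (fun j => ?_)
      ((hξ.inner_products_summable x).mul_left (C ^ 2))
    rw [norm_mul, mul_pow, RCLike.norm_ofReal]
    gcongr
    exact hlam j
  refine ((hξ.orthogonalFamily.summable_iff_norm_sq_summable _).2 hsq).congr fun j => ?_
  rw [LinearIsometry.toSpanSingleton_apply, ← smul_assoc, RCLike.real_smul_eq_coe_mul]

theorem Orthonormal.inner_tsum_smul_inner_smul [CompleteSpace E] [Module ℝ E]
    [IsScalarTower ℝ 𝕜 E] {ξ : ι → E} (hξ : Orthonormal 𝕜 ξ) {lam : ι → ℝ} {C : ℝ}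
    (hlam : ∀ j, |lam j| ≤ C) (x : E) :
    ⟪x, ∑' j, lam j • (⟪ξ j, x⟫_𝕜 • ξ j)⟫_𝕜 = ((∑' j, lam j * ‖⟪ξ j, x⟫_𝕜‖ ^ 2 : ℝ) : 𝕜) := by
  rw [← innerSL_apply_apply, (innerSL 𝕜 x).map_tsum (hξ.summable_smul_inner_smul hlam x),
    RCLike.ofReal_tsum]
  congr 1
  funext j
  rw [innerSL_apply_apply, ← smul_assoc, RCLike.real_smul_eq_coe_mul, inner_smul_right,
    ← inner_conj_symm x, mul_assoc, RCLike.mul_conj]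
  push_cast
  ring

theorem Orthonormal.sum_norm_inner_apply_le {F : Type*} [NormedAddCommGroup F]
    [InnerProductSpace 𝕜 F] [CompleteSpace E] [CompleteSpace F] {v : ι → F}
    (hv : Orthonormal 𝕜 v) (L : F →L[𝕜] E) (y : E) (s : Finset ι) :
    ∑ k ∈ s, ‖⟪y, L (v k)⟫_𝕜‖ ^ 2 ≤ (‖L‖ * ‖y‖) ^ 2 := by
  calc ∑ k ∈ s, ‖⟪y, L (v k)⟫_𝕜‖ ^ 2 = ∑ k ∈ s, ‖⟪v k, L.adjoint y⟫_𝕜‖ ^ 2 := by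
        simp_rw [ContinuousLinearMap.adjoint_inner_right, norm_inner_symm]
    _ ≤ ‖L.adjoint y‖ ^ 2 := hv.sum_inner_products_le _
    _ ≤ (‖L‖ * ‖y‖) ^ 2 := by
        gcongr
        simpa using L.adjoint.le_opNorm y

end Hilbert

section Majorization

variable {lam : ℕ → ℝ}

theorem summable_mul_of_antitone (hlam : Antitone lam) (hlam0 : ∀ j, 0 ≤ lam j) {t : ℕ → ℝ}
    (ht0 : ∀ j, 0 ≤ t j) (ht : Summable t) :
    Summable fun j => lam j * t j :=
  .of_nonneg_of_le (fun j => mul_nonneg (hlam0 j) (ht0 j))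
    (fun j => mul_le_mul_of_nonneg_right (hlam (Nat.zero_le j)) (ht0 j)) (ht.mul_left (lam 0))

theorem tsum_mul_le_sum_range (hlam : Antitone lam) (hlam0 : ∀ j, 0 ≤ lam j) {t : ℕ → ℝ}
    (ht0 : ∀ j, 0 ≤ t j) (ht1 : ∀ j, t j ≤ 1) (ht : Summable t) {n : ℕ} (htn : ∑' j, t j ≤ n) :
    ∑' j, lam j * t j ≤ ∑ j ∈ range n, lam j := by
  set g : ℕ → ℝ := fun j => if j < n then lam j - lam n else 0
  have hg : ∑' j, g j = ∑ j ∈ range n, (lam j - lam n) := by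
    rw [tsum_eq_sum (s := range n) fun j hj => if_neg (by simpa using hj)]
    exact sum_congr rfl fun j hj => if_pos (mem_range.1 hj)
  have hpt : ∀ j, lam j * t j ≤ lam n * t j + g j := by
    intro j
    by_cases hj : j < n
    · have := mul_le_mul_of_nonneg_left (ht1 j) (sub_nonneg.2 (hlam hj.le))
      simp only [g, if_pos hj]
      linarith
    · have := mul_le_mul_of_nonneg_right (hlam (not_lt.1 hj)) (ht0 j)
      simp only [g, if_neg hj]
      linarith
  have hgs : Summable g := summable_of_ne_finset_zero (s := range n) fun j hj =>
    if_neg (by simpa using hj)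
  calc ∑' j, lam j * t j ≤ ∑' j, (lam n * t j + g j) :=
        (summable_mul_of_antitone hlam hlam0 ht0 ht).tsum_le_tsum hpt ((ht.mul_left _).add hgs)
    _ = lam n * ∑' j, t j + ∑ j ∈ range n, (lam j - lam n) := by
        rw [(ht.mul_left _).tsum_add hgs, tsum_mul_left, hg]
    _ ≤ lam n * n + ∑ j ∈ range n, (lam j - lam n) := by
        gcongr
        exact hlam0 n
    _ = ∑ j ∈ range n, lam j := by
        rw [sum_sub_distrib, sum_const, card_range, nsmul_eq_mul]
        ring

theorem sum_range_tsum_mul_le_sum_range (hlam : Antitone lam) (hlam0 : ∀ j, 0 ≤ lam j)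
    {c : ℕ → ℕ → ℝ} (hc0 : ∀ j k, 0 ≤ c j k)
    (hcol : ∀ k, Summable (c · k)) (hcol1 : ∀ k, ∑' j, c j k ≤ 1) {n : ℕ}
    (hrow : ∀ j, ∑ k ∈ range n, c j k ≤ 1) :
    ∑ k ∈ range n, ∑' j, lam j * c j k ≤ ∑ k ∈ range n, lam k := by
  have hrow0 : ∀ j, 0 ≤ ∑ k ∈ range n, c j k := fun j => sum_nonneg fun k _ => hc0 j k
  have hrows : Summable fun j => ∑ k ∈ range n, c j k := summable_sum fun k _ => hcol k
  calc ∑ k ∈ range n, ∑' j, lam j * c j k = ∑' j, lam j * ∑ k ∈ range n, c j k := by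
        simp_rw [mul_sum]
        exact (Summable.tsum_finsetSum fun k _ =>
          summable_mul_of_antitone hlam hlam0 (hc0 · k) (hcol k)).symm
    _ ≤ ∑ k ∈ range n, lam k := by
        refine tsum_mul_le_sum_range hlam hlam0 hrow0 hrow hrows ?_
        rw [Summable.tsum_finsetSum fun k _ => hcol k]
        simpa using sum_le_sum fun k (_ : k ∈ range n) => hcol1 k

end Majorization

theorem diagonal_of_compression_majorized_general {H : Type*} [NormedAddCommGroup H]
    [InnerProductSpace ℂ H] [CompleteSpace H]
    (e : HilbertBasis ℕ ℂ H)
    (A : H →L[ℂ] H) (lam : ℕ → ℝ) (hmono : Antitone lam) (h0 : ∀ k, 0 ≤ lam k)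
    (ξ : ℕ → H) (hON : Orthonormal ℂ ξ)
    (hrep : ∀ x, A x = ∑' k, lam k • ((⟪ξ k, x⟫_ℂ) • ξ k))
    (L : H →L[ℂ] H) (hL : ‖L‖ ≤ 1)
    (p : ℕ → ℝ)
    (hdiag : ∀ k, ⟪e k, (ContinuousLinearMap.adjoint L * A * L) (e k)⟫_ℂ = (p k : ℂ)) :
    ∀ n : ℕ, ∑ k ∈ Finset.range n, p k ≤ ∑ k ∈ Finset.range n, lam k := by
  intro n
  have hbdd : ∀ j, |lam j| ≤ lam 0 :=
    fun j => abs_le.2 ⟨by linarith [h0 j, h0 0], hmono j.zero_le⟩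
  have hLe : ∀ k, ‖L (e k)‖ ^ 2 ≤ 1 := fun k => by
    have := L.le_of_opNorm_le hL (e k)
    rw [e.orthonormal.1 k, mul_one] at this
    exact pow_le_one₀ (norm_nonneg _) this
  have hp : ∀ k, p k = ∑' j, lam j * ‖⟪ξ j, L (e k)⟫_ℂ‖ ^ 2 := fun k => by
    have := hdiag k
    rw [mul_apply_eq_comp, mul_apply_eq_comp, ContinuousLinearMap.adjoint_inner_right, hrep,
      hON.inner_tsum_smul_inner_smul hbdd] at this
    exact Complex.ofReal_injective this.symm
  rw [sum_congr rfl fun k _ => hp k]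
  refine sum_range_tsum_mul_le_sum_range hmono h0 (fun _ _ => by positivity)
    (fun k => hON.inner_products_summable _)
    (fun k => (hON.tsum_inner_products_le _).trans (hLe k)) fun j => ?_
  refine (e.orthonormal.sum_norm_inner_apply_le L (ξ j) _).trans ?_
  rw [hON.1 j, mul_one]
  exact pow_le_one₀ (norm_nonneg L) hL

/-- If `A` is a positive compact operator with eigenvalue list `lam` and `L` is a
contraction such that the diagonal of `L*AL` with respect to an orthonormal basis
`e` is the decreasing nonnegative sequence `p`, then the partial sums of `p` are
dominated by those of `lam`. -/
theorem diagonal_of_compression_majorized {H : Type*} [NormedAddCommGroup H]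
    [InnerProductSpace ℂ H] [CompleteSpace H]
    (e : HilbertBasis ℕ ℂ H)
    (A : H →L[ℂ] H) (hA : IsCompactOperator A) (hpos : A.IsPositive)
    (lam : ℕ → ℝ) (hmono : Antitone lam) (h0 : ∀ k, 0 ≤ lam k)
    (ξ : ℕ → H) (hON : Orthonormal ℂ ξ)
    (hrep : ∀ x, A x = ∑' k, lam k • ((⟪ξ k, x⟫_ℂ) • ξ k))
    (L : H →L[ℂ] H) (hL : ‖L‖ ≤ 1)
    (p : ℕ → ℝ) (hpmono : Antitone p) (hp0 : ∀ k, 0 ≤ p k)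
    (hdiag : ∀ k, ⟪e k, (ContinuousLinearMap.adjoint L * A * L) (e k)⟫_ℂ = (p k : ℂ)) :
    ∀ n : ℕ, ∑ k ∈ Finset.range n, p k ≤ ∑ k ∈ Finset.range n, lam k :=
  diagonal_of_compression_majorized_general e A lam hmono h0 ξ hON hrep L hL p hdiag
end

section
/- Let p = (p₁, p₂, …) be a sequence of real numbers with 0 ≤ pₖ ≤ 1 for all k, and let m be a positive integer. Then there exists an orthogonal projection P of rank m on ℓ² whose matrix with respect to the standard basis has diagonal (p₁, p₂, …) if and only if p₁ + p₂ + ⋯ = m. -/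
/-!
If `P` is a rank-`m` orthogonal projection and `f₁, …, fₘ` is an orthonormal basis of its range,
then `⟪uₖ, P uₖ⟫ = ∑ⱼ ‖⟪uₖ, fⱼ⟫‖²`; summing over `k` and using Parseval's identity for each `fⱼ`
gives `∑ₖ pₖ = m`.

Conversely, it suffices to find a Parseval frame `(xₖ)` of `ℝᵐ` with `‖xₖ‖² = pₖ`: the sequences
`(⟪xₖ, eⱼ⟫)ₖ` are orthonormal in `ℓ²`, and the projection onto their span has diagonal `‖xₖ‖²`.
For finitely many entries we induct on the number of entries in `(0, 1)`. Two such entries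
`a, b` are replaced by `a + b - t` and `t ∈ {0, 1}`; a frame vector of norm `0` or `1` is orthogonal
to all the others, so a rotation in the plane of the two frame vectors restores the norms `a, b`.
For the whole sequence, choose `N` with tail `σ = ∑_{k ≥ N} pₖ ≤ 1`, solve the finite problem for
`(p₀, …, p_{N-1}, σ)` and spread the last frame vector `y` over `k ≥ N` as `√(pₖ / σ) • y`.
-/

open scoped InnerProductSpace RealInnerProductSpace
open Module Finset

section

variable {ι κ E 𝕜 H : Type*} [NormedAddCommGroup E] [InnerProductSpace ℝ E] [RCLike 𝕜]
  [NormedAddCommGroup H] [InnerProductSpace 𝕜 H]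

def IsParsevalFrame (x : ι → E) : Prop :=
  ∀ v w : E, HasSum (fun i => ⟪x i, v⟫ * ⟪x i, w⟫) ⟪v, w⟫

theorem HasSum.congr_off_pair {α : Type*} [AddCommGroup α] [TopologicalSpace α]
    [IsTopologicalAddGroup α] {f g : ι → α} {s : α} (hf : HasSum f s) {a b : ι} (hab : a ≠ b)
    (hfg : ∀ i, i ≠ a → i ≠ b → f i = g i) (hpair : f a + f b = g a + g b) :
    HasSum g s := by
  classical
  have hdiff : HasSum (g - f) 0 := by
    have : HasSum (g - f) (∑ i ∈ {a, b}, (g - f) i) := hasSum_sum_of_ne_finset_zero fun i hi => by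
      simp only [mem_insert, mem_singleton, not_or] at hi
      simp [hfg i hi.1 hi.2]
    rwa [sum_pair hab, Pi.sub_apply, Pi.sub_apply, sub_add_sub_comm, hpair, sub_self] at this
  simpa using hf.add hdiff

theorem IsParsevalFrame.inner_eq_zero_of_norm_sq_eq_zero_or_one {x : ι → E}
    (hx : IsParsevalFrame x) {a b : ι} (hab : a ≠ b) (hb : ‖x b‖ ^ 2 = 0 ∨ ‖x b‖ ^ 2 = 1) :
    ⟪x a, x b⟫ = 0 := by
  classical
  -- Parseval at `x b` reads `∑ᵢ ⟪x i, x b⟫² = ‖x b‖²`, and the term `i = b` is `‖x b‖⁴ = ‖x b‖²`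
  have hle := sum_le_hasSum {a, b} (fun i _ => mul_self_nonneg _) (hx (x b) (x b))
  rw [sum_pair hab, real_inner_self_eq_norm_sq] at hle
  have hidem : ‖x b‖ ^ 2 * ‖x b‖ ^ 2 = ‖x b‖ ^ 2 := by rcases hb with h | h <;> simp [h]
  nlinarith [mul_self_nonneg ⟪x a, x b⟫]

theorem IsParsevalFrame.exists_rotate {x : ι → E} (hx : IsParsevalFrame x) {a b : ι}
    (hab : a ≠ b) (hxab : ⟪x a, x b⟫ = 0) {l : ℝ} (hl : l ∈ Set.Icc 0 1) :
    ∃ y : ι → E, IsParsevalFrame y ∧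
      ‖y a‖ ^ 2 = l * ‖x a‖ ^ 2 + (1 - l) * ‖x b‖ ^ 2 ∧
      ‖y b‖ ^ 2 = (1 - l) * ‖x a‖ ^ 2 + l * ‖x b‖ ^ 2 ∧
      ∀ i, i ≠ a → i ≠ b → y i = x i := by
  classical
  set c := √l
  set s := √(1 - l)
  have hc : c ^ 2 = l := Real.sq_sqrt hl.1
  have hs : s ^ 2 = 1 - l := Real.sq_sqrt (by linarith [hl.2])
  set y := Function.update (Function.update x a (c • x a + s • x b)) b (-s • x a + c • x b)
  have hya : y a = c • x a + s • x b := by simp [y, hab]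
  have hyb : y b = -s • x a + c • x b := by simp [y]
  have hy : ∀ i, i ≠ a → i ≠ b → y i = x i := fun i ha hb => by simp [y, ha, hb]
  have hnorm (c' s' : ℝ) :
      ‖c' • x a + s' • x b‖ ^ 2 = c' ^ 2 * ‖x a‖ ^ 2 + s' ^ 2 * ‖x b‖ ^ 2 := by
    rw [norm_add_sq_real, inner_smul_left, inner_smul_right, hxab, norm_smul, norm_smul,
      mul_pow, mul_pow, Real.norm_eq_abs, Real.norm_eq_abs, sq_abs, sq_abs]
    simp
  refine ⟨y, fun v w => (hx v w).congr_off_pair hab (fun i ha hb => by rw [hy i ha hb]) ?_,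
    ?_, ?_, hy⟩
  · simp only [hya, hyb, inner_add_left, inner_smul_left, RCLike.conj_to_real]
    linear_combination -(⟪x a, v⟫ * ⟪x a, w⟫ + ⟪x b, v⟫ * ⟪x b, w⟫) * (hc + hs)
  · rw [hya, hnorm, hc, hs]
  · rw [hyb, hnorm, neg_sq, hc, hs]

theorem exists_mix_of_mem_Ioo {a b : ℝ} (ha : a ∈ Set.Ioo 0 1) (hb : b ∈ Set.Ioo 0 1) :
    ∃ t l : ℝ, (t = 0 ∨ t = 1) ∧ a + b - t ∈ Set.Icc 0 1 ∧ l ∈ Set.Icc 0 1 ∧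
      l * (a + b - t) + (1 - l) * t = a ∧ (1 - l) * (a + b - t) + l * t = b := by
  obtain ⟨ha0, ha1⟩ := ha
  obtain ⟨hb0, hb1⟩ := hb
  rcases le_or_gt (a + b) 1 with hab | hab
  · refine ⟨0, a / (a + b), .inl rfl, ⟨by linarith, by linarith⟩,
      ⟨by positivity, (div_le_one (by linarith)).2 (by linarith)⟩, ?_, ?_⟩ <;>
      field_simp <;> ring
  · have hden : 0 < 2 - a - b := by linarith
    refine ⟨1, (1 - a) / (2 - a - b), .inr rfl, ⟨by linarith, by linarith⟩,
      ⟨div_nonneg (by linarith) hden.le, (div_le_one hden).2 (by linarith)⟩, ?_, ?_⟩ <;>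
      field_simp <;> ring

theorem Finset.sum_eq_card_filter_eq_one {q : ι → ℝ} (s : Finset ι)
    (hq : ∀ i ∈ s, q i = 0 ∨ q i = 1) : ∑ i ∈ s, q i = #{i ∈ s | q i = 1} := by
  classical
  rw [natCast_card_filter]
  refine sum_congr rfl fun i hi => ?_
  rcases hq i hi with h | h <;> simp [h]

theorem eq_zero_or_eq_one_of_mem_Icc_of_notMem_Ioo {r : ℝ} (h : r ∈ Set.Icc 0 1)
    (h' : r ∉ Set.Ioo 0 1) : r = 0 ∨ r = 1 := by
  simp only [Set.mem_Icc, Set.mem_Ioo, not_and_or, not_lt] at h h'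
  rcases h' with h' | h'
  · exact .inl (by linarith)
  · exact .inr (by linarith)

theorem exists_ne_mem_Ioo [Fintype ι] {q : ι → ℝ} (hq : ∀ i, q i ∈ Set.Icc 0 1) {m : ℕ}
    (hsum : ∑ i, q i = m) {a : ι} (ha : q a ∈ Set.Ioo 0 1) : ∃ b ≠ a, q b ∈ Set.Ioo 0 1 := by
  classical
  -- otherwise `q a = m - #{i ≠ a | q i = 1}` would be an integer
  by_contra! h
  have hrest := (univ.erase a).sum_eq_card_filter_eq_one fun i hi =>
    eq_zero_or_eq_one_of_mem_Icc_of_notMem_Ioo (hq i) (h i (ne_of_mem_erase hi))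
  rw [← add_sum_erase _ _ (mem_univ a), hrest] at hsum
  set k := #{i ∈ univ.erase a | q i = 1}
  have hkm : k < m := by exact_mod_cast (show (k : ℝ) < m by linarith [ha.1])
  have : (k : ℝ) + 1 ≤ m := by exact_mod_cast hkm
  linarith [ha.2]

theorem exists_isParsevalFrame_of_forall_eq_zero_or_one [Fintype ι] [FiniteDimensional ℝ E]
    {q : ι → ℝ} (hq : ∀ i, q i = 0 ∨ q i = 1) (hsum : ∑ i, q i = finrank ℝ E) :
    ∃ x : ι → E, IsParsevalFrame x ∧ ∀ i, ‖x i‖ ^ 2 = q i := by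
  classical
  have hcard : Fintype.card {i // q i = 1} = finrank ℝ E := by
    rw [Fintype.card_subtype]
    exact_mod_cast ((univ.sum_eq_card_filter_eq_one fun i _ => hq i).symm.trans hsum)
  let b : OrthonormalBasis {i // q i = 1} ℝ E :=
    (stdOrthonormalBasis ℝ E).reindex (Fintype.equivFinOfCardEq hcard).symm
  refine ⟨fun i => if h : q i = 1 then b ⟨i, h⟩ else 0, fun v w => ?_, fun i => ?_⟩
  · have hb : HasSum (fun j => ⟪b j, v⟫ * ⟪b j, w⟫) ⟪v, w⟫ := by
      rw [← b.sum_inner_mul_inner v w]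
      exact (hasSum_fintype _).congr_fun fun j => by rw [real_inner_comm v]
    refine (hasSum_subtype_iff_of_support_subset (s := {i | q i = 1}) ?_).mp
      (hb.congr_fun fun j => by simp [j.2])
    exact Function.support_subset_iff'.mpr fun i h => by simp [show ¬q i = 1 from h]
  · by_cases h : q i = 1
    · simp [h, b.norm_eq_one]
    · simp [(hq i).resolve_right h]

theorem exists_mix_reducing_card_mem_Ioo [Fintype ι] {q : ι → ℝ} (hq : ∀ i, q i ∈ Set.Icc 0 1)
    {a b : ι} (hab : a ≠ b) (ha : q a ∈ Set.Ioo 0 1) (hb : q b ∈ Set.Ioo 0 1) :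
    ∃ (q' : ι → ℝ) (l : ℝ), (∀ i, q' i ∈ Set.Icc 0 1) ∧ ∑ i, q' i = ∑ i, q i ∧
      #{i | q' i ∈ Set.Ioo 0 1} < #{i | q i ∈ Set.Ioo 0 1} ∧ (q' b = 0 ∨ q' b = 1) ∧
      l ∈ Set.Icc 0 1 ∧ l * q' a + (1 - l) * q' b = q a ∧ (1 - l) * q' a + l * q' b = q b ∧
      ∀ i, i ≠ a → i ≠ b → q' i = q i := by
  classical
  obtain ⟨t, l, ht, hta, hl, hla, hlb⟩ := exists_mix_of_mem_Ioo ha hb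
  set q' := Function.update (Function.update q a (q a + q b - t)) b t
  have hq'a : q' a = q a + q b - t := by simp [q', hab]
  have hq'b : q' b = t := by simp [q']
  have hq' : ∀ i, i ≠ a → i ≠ b → q' i = q i := fun i hia hib => by simp [q', hia, hib]
  have htb : t ∉ Set.Ioo 0 1 := by rcases ht with rfl | rfl <;> simp
  refine ⟨q', l, fun i => ?_, ?_, ?_, hq'b ▸ ht, hl, by rwa [hq'a, hq'b], by rwa [hq'a, hq'b], hq'⟩
  · by_cases hia : i = a
    · rwa [hia, hq'a]
    by_cases hib : i = b
    · rw [hib, hq'b]; rcases ht with rfl | rfl <;> simp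
    · rw [hq' i hia hib]; exact hq i
  · exact ((hasSum_fintype q).congr_off_pair hab (fun i hia hib => (hq' i hia hib).symm)
      (by rw [hq'a, hq'b]; ring)).unique (hasSum_fintype q') |>.symm
  · refine card_lt_card ((ssubset_iff_of_subset fun i => ?_).mpr
      ⟨b, by simpa using hb, by simpa [hq'b] using htb⟩)
    simp only [mem_filter, mem_univ, true_and]
    by_cases hia : i = a
    · exact fun _ => hia ▸ ha
    by_cases hib : i = b
    · simp [hib, hq'b, htb]
    · rw [hq' i hia hib]; exact id

theorem exists_isParsevalFrame_norm_sq_eq_of_fintype [Fintype ι] [FiniteDimensional ℝ E]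
    {q : ι → ℝ} (hq : ∀ i, q i ∈ Set.Icc 0 1) (hsum : ∑ i, q i = finrank ℝ E) :
    ∃ x : ι → E, IsParsevalFrame x ∧ ∀ i, ‖x i‖ ^ 2 = q i := by
  classical
  induction hn : #{i | q i ∈ Set.Ioo 0 1} using Nat.strong_induction_on generalizing q with
  | _ n ih =>
  by_cases h01 : ∀ i, q i ∉ Set.Ioo 0 1
  · exact exists_isParsevalFrame_of_forall_eq_zero_or_one
      (fun i => eq_zero_or_eq_one_of_mem_Icc_of_notMem_Ioo (hq i) (h01 i)) hsum
  obtain ⟨a, ha⟩ := not_forall_not.mp h01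
  obtain ⟨b, hba, hb⟩ := exists_ne_mem_Ioo hq hsum ha
  obtain ⟨q', l, hq'01, hsum', hlt, hq'b, hl, hla, hlb, hq'⟩ :=
    exists_mix_reducing_card_mem_Ioo hq hba.symm ha hb
  obtain ⟨y, hy, hyq⟩ := ih _ (hn ▸ hlt) hq'01 (hsum'.trans hsum) rfl
  have hyab : ⟪y a, y b⟫ = 0 := hy.inner_eq_zero_of_norm_sq_eq_zero_or_one hba.symm (by rwa [hyq])
  obtain ⟨x, hx, hxa, hxb, hxi⟩ := hy.exists_rotate hba.symm hyab hl
  refine ⟨x, hx, fun i => ?_⟩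
  by_cases hia : i = a
  · rw [hia, hxa, hyq, hyq, hla]
  by_cases hib : i = b
  · rw [hib, hxb, hyq, hyq, hlb]
  · rw [hxi i hia hib, hyq, hq' i hia hib]

theorem exists_hasSum_sq_eq_one {p : ℕ → ℝ} (hp : ∀ k, 0 ≤ p k) {σ : ℝ} (hσ : HasSum p σ) :
    ∃ w : ℕ → ℝ, HasSum (fun k => w k ^ 2) 1 ∧ ∀ k, σ * w k ^ 2 = p k := by
  rcases (hσ.nonneg hp).eq_or_lt with rfl | hpos
  · refine ⟨Pi.single 0 1, ?_, fun k => ?_⟩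
    · convert hasSum_single (f := fun k => (Pi.single 0 1 : ℕ → ℝ) k ^ 2) 0 fun k hk => by simp [hk]
      simp
    · simp [(hasSum_zero_iff_of_nonneg hp).mp hσ]
  · refine ⟨fun k => √(p k / σ), ?_, fun k => ?_⟩
    · simp_rw [Real.sq_sqrt (div_nonneg (hp _) hpos.le)]
      simpa [hpos.ne'] using hσ.div_const σ
    · rw [Real.sq_sqrt (div_nonneg (hp _) hpos.le), mul_div_cancel₀ _ hpos.ne']

def spreadLast {N : ℕ} (y : Fin (N + 1) → E) (w : ℕ → ℝ) (k : ℕ) : E :=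
  if h : k < N then y (Fin.castSucc ⟨k, h⟩) else w (k - N) • y (Fin.last N)

theorem isParsevalFrame_spreadLast {N : ℕ} {y : Fin (N + 1) → E} (hy : IsParsevalFrame y)
    {w : ℕ → ℝ} (hw : HasSum (fun k => w k ^ 2) 1) : IsParsevalFrame (spreadLast y w) := by
  intro v v'
  set x := spreadLast y w
  have hhead : ∑ k ∈ range N, ⟪x k, v⟫ * ⟪x k, v'⟫ =
      ⟪v, v'⟫ - ⟪y (Fin.last N), v⟫ * ⟪y (Fin.last N), v'⟫ := by
    rw [← (hasSum_fintype _).unique (hy v v'), Fin.sum_univ_castSucc, ← Fin.sum_univ_eq_sum_range]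
    simp only [x, spreadLast, Fin.is_lt, dite_true, Fin.eta, add_sub_cancel_right]
  have htail : ∀ k, ⟪x (k + N), v⟫ * ⟪x (k + N), v'⟫ =
      w k ^ 2 * (⟪y (Fin.last N), v⟫ * ⟪y (Fin.last N), v'⟫) := fun k => by
    simp only [x, spreadLast, show ¬(k + N < N) by omega, dite_false, Nat.add_sub_cancel,
      inner_smul_left, RCLike.conj_to_real]
    ring
  rw [← hasSum_nat_add_iff' N, hhead, sub_sub_cancel]
  simpa [htail] using hw.mul_right (⟪y (Fin.last N), v⟫ * ⟪y (Fin.last N), v'⟫)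

theorem exists_isParsevalFrame_norm_sq_eq [FiniteDimensional ℝ E] {p : ℕ → ℝ}
    (hp : ∀ k, p k ∈ Set.Icc 0 1) (hsum : HasSum p (finrank ℝ E)) :
    ∃ x : ℕ → E, IsParsevalFrame x ∧ ∀ k, ‖x k‖ ^ 2 = p k := by
  obtain ⟨N, hN⟩ : ∃ N, (finrank ℝ E : ℝ) - 1 < ∑ k ∈ range N, p k :=
    (hsum.tendsto_sum_nat.eventually_const_lt (sub_one_lt _)).exists
  set σ := finrank ℝ E - ∑ k ∈ range N, p k
  have htail : HasSum (fun k => p (k + N)) σ := (hasSum_nat_add_iff' N).mpr hsum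
  obtain ⟨w, hw, hwp⟩ := exists_hasSum_sq_eq_one (fun k => (hp _).1) htail
  set q : Fin (N + 1) → ℝ := fun i => if (i : ℕ) < N then p i else σ
  have hq : ∀ i, q i ∈ Set.Icc 0 1 := fun i => by
    by_cases hi : (i : ℕ) < N
    · simp only [q, if_pos hi]; exact hp i
    · simp only [q, if_neg hi]; exact ⟨htail.nonneg fun k => (hp _).1, by linarith⟩
  have hqsum : ∑ i, q i = finrank ℝ E := by
    simp [Fin.sum_univ_castSucc, q, Fin.sum_univ_eq_sum_range (fun k => p k), σ]
  obtain ⟨y, hy, hyq⟩ := exists_isParsevalFrame_norm_sq_eq_of_fintype hq hqsum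
  refine ⟨_, isParsevalFrame_spreadLast hy hw, fun k => ?_⟩
  by_cases hk : k < N
  · simp [spreadLast, hk, hyq, q]
  · simp only [spreadLast, hk, dite_false, norm_smul, mul_pow, Real.norm_eq_abs, sq_abs, hyq, q,
      Fin.val_last, lt_irrefl, if_false]
    rw [mul_comm, hwp, Nat.sub_add_cancel (not_lt.mp hk)]

theorem HilbertBasis.hasSum_norm_inner_sq (u : HilbertBasis ι 𝕜 H) (y : H) :
    HasSum (fun i => ‖⟪u i, y⟫_𝕜‖ ^ 2) (‖y‖ ^ 2) := by
  have h := u.hasSum_inner_mul_inner y y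
  simp_rw [← inner_conj_symm y (u _), RCLike.conj_mul, inner_self_eq_norm_sq_to_K] at h
  exact_mod_cast h

theorem OrthonormalBasis.inner_starProjection_self [Fintype κ] {K : Submodule 𝕜 H}
    [K.HasOrthogonalProjection] (b : OrthonormalBasis κ 𝕜 K) (x : H) :
    ⟪x, K.starProjection x⟫_𝕜 = ((∑ j, ‖⟪x, (b j : H)⟫_𝕜‖ ^ 2 : ℝ) : 𝕜) := by
  rw [b.starProjection_eq_sum_rankOne, _root_.sum_apply, inner_sum]
  push_cast
  refine sum_congr rfl fun j _ => ?_
  rw [InnerProductSpace.rankOne_apply, inner_smul_right, ← inner_conj_symm (b j : H) x,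
    RCLike.conj_mul]

theorem HilbertBasis.hasSum_inner_starProjection (u : HilbertBasis ι 𝕜 H) (K : Submodule 𝕜 H)
    [FiniteDimensional 𝕜 K] :
    HasSum (fun i => ⟪u i, K.starProjection (u i)⟫_𝕜) (finrank 𝕜 K) := by
  let b := stdOrthonormalBasis 𝕜 K
  simp_rw [b.inner_starProjection_self]
  have := hasSum_sum (s := univ) fun j _ => u.hasSum_norm_inner_sq (b j : H)
  simp only [Submodule.norm_coe, b.norm_eq_one, one_pow, sum_const, card_univ,
    Fintype.card_fin, nsmul_eq_mul, mul_one] at this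
  simpa only [RCLike.ofReal_natCast] using (RCLike.hasSum_ofReal 𝕜).mpr this

theorem Orthonormal.inner_starProjection_span_self [Fintype κ] {f : κ → H}
    (hf : Orthonormal 𝕜 f) [(Submodule.span 𝕜 (Set.range f)).HasOrthogonalProjection] (x : H) :
    ⟪x, (Submodule.span 𝕜 (Set.range f)).starProjection x⟫_𝕜 =
      ((∑ j, ‖⟪x, f j⟫_𝕜‖ ^ 2 : ℝ) : 𝕜) := by
  let b := (Basis.span hf.linearIndependent).toOrthonormalBasis
    (by rw [funext (Basis.span_apply hf.linearIndependent)]; exact orthonormal_span hf)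
  simp [b.inner_starProjection_self, b, Basis.span_apply]

theorem IsParsevalFrame.exists_orthonormal_inner_eq [Fintype κ] {x : ι → E}
    (hx : IsParsevalFrame x) (b : OrthonormalBasis κ ℝ E) (u : HilbertBasis ι 𝕜 H) :
    ∃ f : κ → H, Orthonormal 𝕜 f ∧ ∀ i j, ⟪u i, f j⟫_𝕜 = (⟪x i, b j⟫ : 𝕜) := by
  classical
  have hcoef : ∀ j j', HasSum (fun i => ((⟪x i, b j⟫ * ⟪x i, b j'⟫ : ℝ) : 𝕜))
      (if j = j' then 1 else 0) := fun j j' => by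
    have := (RCLike.hasSum_ofReal 𝕜).mpr (hx (b j) (b j'))
    rwa [orthonormal_iff_ite.mp b.orthonormal, apply_ite ((↑) : ℝ → 𝕜), RCLike.ofReal_one,
      RCLike.ofReal_zero] at this
  have hmem : ∀ j, Memℓp (fun i => (⟪x i, b j⟫ : 𝕜)) 2 := fun j => memℓp_gen <| by
    simpa [← sq] using (hx (b j) (b j)).summable
  let g : κ → lp (fun _ : ι => 𝕜) 2 := fun j => ⟨_, hmem j⟩
  have hg : Orthonormal 𝕜 g := orthonormal_iff_ite.mpr fun j j' =>
    (lp.hasSum_inner (g j) (g j')).unique <| by simpa [g, mul_comm] using hcoef j j'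
  refine ⟨u.repr.symm ∘ g, hg.comp_linearIsometryEquiv _, fun i j => ?_⟩
  rw [Function.comp_apply, ← u.repr_apply_apply, LinearIsometryEquiv.apply_symm_apply]

end

/-- A sequence `p` with `0 ≤ p k ≤ 1` is the diagonal, with respect to an
orthonormal basis `u` of a separable Hilbert space, of a rank-`m` orthogonal
projection if and only if `∑ p k = m`. -/
theorem diagonal_of_rank_m_projection {H : Type*} [NormedAddCommGroup H]
    [InnerProductSpace ℂ H] [CompleteSpace H]
    (u : HilbertBasis ℕ ℂ H)
    (p : ℕ → ℝ) (hp : ∀ k, 0 ≤ p k ∧ p k ≤ 1) (m : ℕ) (hm : 0 < m) :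
    (∃ P : H →L[ℂ] H, IsIdempotentElem P ∧ IsSelfAdjoint P ∧
        FiniteDimensional ℂ (LinearMap.range (P : H →ₗ[ℂ] H)) ∧
        Module.finrank ℂ (LinearMap.range (P : H →ₗ[ℂ] H)) = m ∧
        ∀ k, ⟪u k, P (u k)⟫_ℂ = (p k : ℂ)) ↔
      ∑' k, p k = (m : ℝ) := by
  constructor
  · rintro ⟨P, hidem, hsa, hfin, hrank, hdiag⟩
    obtain ⟨_, hP⟩ := isStarProjection_iff_eq_starProjection_range.mp ⟨hidem, hsa⟩
    have htrace := u.hasSum_inner_starProjection (LinearMap.range (P : H →ₗ[ℂ] H))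
    rw [← hP, hrank] at htrace
    simp_rw [hdiag, ← Complex.ofReal_natCast] at htrace
    exact (Complex.hasSum_ofReal.mp htrace).tsum_eq
  · intro hsum
    have hsummable : Summable p := by
      by_contra h
      rw [tsum_eq_zero_of_not_summable h] at hsum
      exact hm.ne (by exact_mod_cast hsum)
    obtain ⟨x, hx, hxp⟩ := exists_isParsevalFrame_norm_sq_eq (E := EuclideanSpace ℝ (Fin m)) hp
      (by simpa [hsum] using hsummable.hasSum)
    obtain ⟨f, hf, hfu⟩ := hx.exists_orthonormal_inner_eq (EuclideanSpace.basisFun (Fin m) ℝ) u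
    set K := Submodule.span ℂ (Set.range f)
    have : FiniteDimensional ℂ K := FiniteDimensional.span_of_finite ℂ (Set.finite_range f)
    refine ⟨K.starProjection, K.isIdempotentElem_starProjection, isSelfAdjoint_starProjection K,
      ?_, ?_, fun k => ?_⟩
    · rwa [Submodule.range_starProjection]
    · rw [Submodule.range_starProjection, finrank_span_eq_card hf.linearIndependent,
        Fintype.card_fin]
    · rw [hf.inner_starProjection_span_self, ← hxp k,
        ← (EuclideanSpace.basisFun (Fin m) ℝ).sum_sq_inner_right (x k)]
      simp [hfu, real_inner_comm]
end

section
/- Every continuous convex function f on a compact interval [a,b] ⊆ ℝ can be uniformly approximated on [a,b] by functions of the form λ ↦ a₀ + b₀λ + ∑ₖ cₖ max(λ − rₖ, 0) where a₀, b₀, rₖ ∈ ℝ and cₖ ≥ 0. -/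
/-!
Interpolate `f` linearly between the nodes of a fine grid `a = p₀ < p₁ < ⋯ < p_{N+1} = b`.
This polygon is `f p₀ + s₀ (x - p₀) + ∑ₖ (sₖ₊₁ - sₖ) max (x - pₖ₊₁) 0`, where `sᵢ` is the slope
of the chord over `[pᵢ, pᵢ₊₁]`: each hinge switches on the change of slope at its node.
Convexity makes the chord slopes increase, so the coefficients are nonnegative, and uniform
continuity makes the polygon `ε`-close to `f` once the mesh is small, because on each cell it is a
convex combination of two values of `f` that are both `ε`-close to `f x`.
-/

open Finset Set

noncomputable section

theorem exists_div_nat_succ_le (L : ℝ) {δ : ℝ} (hδ : 0 < δ) : ∃ N : ℕ, L / (N + 1) ≤ δ := by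
  obtain ⟨N, hN⟩ := exists_nat_gt (L / δ)
  refine ⟨N, div_le_of_le_mul₀ (by positivity) hδ.le ?_⟩
  rw [div_lt_iff₀ hδ] at hN
  linarith

namespace HingeInterpolation

variable (f : ℝ → ℝ) (p : ℕ → ℝ)

def chordSlope (i : ℕ) : ℝ := slope f (p i) (p (i + 1))

def polygon (N : ℕ) (x : ℝ) : ℝ :=
  f (p 0) + chordSlope f p 0 * (x - p 0) +
    ∑ k : Fin N, (chordSlope f p (k + 1) - chordSlope f p k) * max (x - p (k + 1)) 0

theorem chordSlope_mul_sub (i : ℕ) :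
    chordSlope f p i * (p (i + 1) - p i) = f (p (i + 1)) - f (p i) := by
  rw [mul_comm]
  exact sub_smul_slope f (p i) (p (i + 1))

theorem add_sum_range_chordSlope (j : ℕ) (x : ℝ) :
    f (p 0) + chordSlope f p 0 * (x - p 0) +
        ∑ k ∈ range j, (chordSlope f p (k + 1) - chordSlope f p k) * (x - p (k + 1)) =
      f (p j) + chordSlope f p j * (x - p j) := by
  induction j with
  | zero => simp
  | succ j ih =>
    rw [sum_range_succ, ← add_assoc, ih]
    linear_combination chordSlope_mul_sub f p j

variable {f p}

theorem polygon_eq_of_mem_Icc (hp : Monotone p) {N j : ℕ} (hj : j ≤ N) {x : ℝ}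
    (hx : x ∈ Icc (p j) (p (j + 1))) :
    polygon f p N x = f (p j) + chordSlope f p j * (x - p j) := by
  rw [polygon, ← add_sum_range_chordSlope f p j, Fin.sum_univ_eq_sum_range
    (fun k => (chordSlope f p (k + 1) - chordSlope f p k) * max (x - p (k + 1)) 0)]
  congr 1
  rw [← sum_subset (range_subset_range.2 hj)]
  · refine sum_congr rfl fun k hk => ?_
    rw [max_eq_left (sub_nonneg.2 ((hp (mem_range.1 hk)).trans hx.1))]
  · intro k _ hk
    have hxk : x ≤ p (k + 1) := hx.2.trans (hp (by simpa using hk))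
    rw [max_eq_right (sub_nonpos.2 hxk), mul_zero]

theorem exists_mem_Icc_of_mem_Icc {N : ℕ} {x : ℝ} (hx : x ∈ Icc (p 0) (p (N + 1))) :
    ∃ j ≤ N, x ∈ Icc (p j) (p (j + 1)) := by
  induction N with
  | zero => exact ⟨0, le_rfl, hx⟩
  | succ N ih =>
    by_cases hxN : x ≤ p (N + 1)
    · obtain ⟨j, hjN, hj⟩ := ih ⟨hx.1, hxN⟩
      exact ⟨j, hjN.trans N.le_succ, hj⟩
    · exact ⟨N + 1, le_rfl, le_of_not_ge hxN, hx.2⟩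

theorem _root_.ConvexOn.chordSlope_le_succ {s : Set ℝ} (hf : ConvexOn ℝ s f) (hp : StrictMono p) {i : ℕ}
    (hi : p i ∈ s) (hi' : p (i + 2) ∈ s) : chordSlope f p i ≤ chordSlope f p (i + 1) := by
  simp only [chordSlope, slope_def_field]
  exact hf.slope_mono_adjacent hi hi' (hp i.lt_succ_self) (hp (i + 1).lt_succ_self)

theorem abs_sub_chord_le {a b x ε : ℝ} (hab : a < b) (hx : x ∈ Icc a b)
    (ha : |f x - f a| ≤ ε) (hb : |f x - f b| ≤ ε) :
    |f x - (f a + slope f a b * (x - a))| ≤ ε := by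
  have hba : 0 < b - a := sub_pos.2 hab
  have hsplit : f x - (f a + slope f a b * (x - a)) =
      ((b - x) * (f x - f a) + (x - a) * (f x - f b)) / (b - a) := by
    rw [slope_def_field]
    field_simp
    ring
  rw [hsplit, abs_div, abs_of_pos hba, div_le_iff₀ hba]
  calc |(b - x) * (f x - f a) + (x - a) * (f x - f b)|
      ≤ (b - x) * ε + (x - a) * ε := by
        refine (abs_add_le _ _).trans (add_le_add ?_ ?_)
        · rw [abs_mul, abs_of_nonneg (sub_nonneg.2 hx.2)]
          exact mul_le_mul_of_nonneg_left ha (sub_nonneg.2 hx.2)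
        · rw [abs_mul, abs_of_nonneg (sub_nonneg.2 hx.1)]
          exact mul_le_mul_of_nonneg_left hb (sub_nonneg.2 hx.1)
    _ = ε * (b - a) := by ring

theorem abs_sub_polygon_le (hp : StrictMono p) {N : ℕ} {ε : ℝ}
    (hcell : ∀ j ≤ N, ∀ x ∈ Icc (p j) (p (j + 1)), |f x - f (p j)| ≤ ε ∧ |f x - f (p (j + 1))| ≤ ε)
    {x : ℝ} (hx : x ∈ Icc (p 0) (p (N + 1))) : |f x - polygon f p N x| ≤ ε := by
  obtain ⟨j, hjN, hj⟩ := exists_mem_Icc_of_mem_Icc hx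
  rw [polygon_eq_of_mem_Icc hp.monotone hjN hj]
  exact abs_sub_chord_le (hp j.lt_succ_self) hj (hcell j hjN x hj).1 (hcell j hjN x hj).2

def uniformGrid (a b : ℝ) (N i : ℕ) : ℝ := a + i * ((b - a) / (N + 1))

variable {a b : ℝ} {N : ℕ}

theorem uniformGrid_zero : uniformGrid a b N 0 = a := by simp [uniformGrid]

theorem uniformGrid_last : uniformGrid a b N (N + 1) = b := by
  simp only [uniformGrid]
  push_cast
  field_simp
  ring

theorem uniformGrid_succ_sub (i : ℕ) :
    uniformGrid a b N (i + 1) - uniformGrid a b N i = (b - a) / (N + 1) := by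
  simp only [uniformGrid]
  push_cast
  ring

theorem uniformGrid_strictMono (hab : a < b) : StrictMono (uniformGrid a b N) := by
  refine strictMono_nat_of_lt_succ fun i => sub_pos.1 ?_
  rw [uniformGrid_succ_sub]
  exact div_pos (sub_pos.2 hab) (by positivity)

theorem uniformGrid_mem_Icc (hab : a < b) {i : ℕ} (hi : i ≤ N + 1) :
    uniformGrid a b N i ∈ Icc a b := by
  have hmono := (uniformGrid_strictMono (N := N) hab).monotone
  constructor
  · simpa only [uniformGrid_zero] using hmono i.zero_le
  · simpa only [uniformGrid_last] using hmono hi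

theorem abs_sub_uniformGrid_le {f : ℝ → ℝ} {δ ε : ℝ} (hab : a < b)
    (hf : ∀ x ∈ Icc a b, ∀ y ∈ Icc a b, dist x y ≤ δ → dist (f x) (f y) ≤ ε)
    (hmesh : (b - a) / (N + 1) ≤ δ) {j : ℕ} (hj : j ≤ N) {x : ℝ}
    (hx : x ∈ Icc (uniformGrid a b N j) (uniformGrid a b N (j + 1))) :
    |f x - f (uniformGrid a b N j)| ≤ ε ∧ |f x - f (uniformGrid a b N (j + 1))| ≤ ε := by
  have hj₀ := uniformGrid_mem_Icc hab (Nat.le_succ_of_le hj)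
  have hj₁ := uniformGrid_mem_Icc hab (Nat.succ_le_succ hj)
  have hxab : x ∈ Icc a b := Icc_subset_Icc hj₀.1 hj₁.2 hx
  have hdist {y : ℝ} (hy : y ∈ Icc (uniformGrid a b N j) (uniformGrid a b N (j + 1))) :
      dist x y ≤ δ :=
    (Real.dist_le_of_mem_Icc hx hy).trans ((uniformGrid_succ_sub j).trans_le hmesh)
  have hcell := (uniformGrid_strictMono (N := N) hab).monotone j.le_succ
  exact ⟨hf x hxab _ hj₀ (hdist (left_mem_Icc.2 hcell)),
    hf x hxab _ hj₁ (hdist (right_mem_Icc.2 hcell))⟩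

end HingeInterpolation

end

open HingeInterpolation

/-- Every continuous convex function on a compact interval `[a,b]` can be uniformly
approximated by functions of the form
`x ↦ a₀ + b₀ * x + ∑ k, c k * max (x - r k) 0` with `c k ≥ 0`. -/
theorem convex_uniform_approx_by_angular (a b : ℝ) (f : ℝ → ℝ)
    (hf : ContinuousOn f (Set.Icc a b)) (hconv : ConvexOn ℝ (Set.Icc a b) f) :
    ∀ ε > (0 : ℝ), ∃ (N : ℕ) (a₀ b₀ : ℝ) (r : Fin N → ℝ) (c : Fin N → ℝ),
      (∀ k, 0 ≤ c k) ∧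
      ∀ x ∈ Set.Icc a b,
        |f x - (a₀ + b₀ * x + ∑ k, c k * max (x - r k) 0)| ≤ ε := by
  intro ε hε
  rcases le_or_gt b a with hba | hab
  · refine ⟨0, f a, 0, Fin.elim0, Fin.elim0, fun k => k.elim0, fun x hx => ?_⟩
    simp [le_antisymm (hx.2.trans hba) hx.1, hε.le]
  obtain ⟨δ, hδ, hfδ⟩ := Metric.uniformContinuousOn_iff_le.1
    (isCompact_Icc.uniformContinuousOn_of_continuous hf) ε hε
  obtain ⟨N, hmesh⟩ := exists_div_nat_succ_le (b - a) hδ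
  set p := uniformGrid a b N
  have hp : StrictMono p := uniformGrid_strictMono hab
  have hp0 : p 0 = a := uniformGrid_zero
  refine ⟨N, f a - chordSlope f p 0 * a, chordSlope f p 0, fun k => p (k + 1),
    fun k => chordSlope f p (k + 1) - chordSlope f p k, fun k => ?_, fun x hx => ?_⟩
  · exact sub_nonneg.2 (hconv.chordSlope_le_succ hp (uniformGrid_mem_Icc hab (by omega))
      (uniformGrid_mem_Icc hab (by omega)))
  · have hpoly := abs_sub_polygon_le (x := x) hp
      (fun j hj y hy => abs_sub_uniformGrid_le hab hfδ hmesh hj hy)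
      (by rwa [hp0, show p (N + 1) = b from uniformGrid_last])
    rw [polygon, hp0] at hpoly
    convert hpoly using 4
    ring
end

section
/- Let λ₁ ≥ ⋯ ≥ λₙ and μ₁ ≥ ⋯ ≥ μₙ be real sequences with λ₁ + ⋯ + λₙ = μ₁ + ⋯ + μₙ. Then the following are equivalent: (1) λ₁ + ⋯ + λ_k ≤ μ₁ + ⋯ + μ_k for every k = 1, …, n; (2) for every convex function f defined on an interval containing all λᵢ and μⱼ, ∑ₖ f(λₖ) ≤ ∑ₖ f(μₖ). -/
/-!
Write `f (λᵢ) - f (μᵢ) = gᵢ (λᵢ - μᵢ)` with `gᵢ` the slope of the chord of `f` between `μᵢ` and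
`λᵢ`. Since both sequences decrease, convexity makes `gᵢ` decrease, and Abel summation writes
`∑ gᵢ (λᵢ - μᵢ)` as a nonnegative combination of the nonpositive partial sums of `λ - μ`.
Conversely, the convex inequality for the hinge `x ↦ max (x - μₖ) 0` gives the `k`-th partial-sum
inequality, since `μᵢ ≥ μₖ` for `i ≤ k` and `μᵢ ≤ μₖ` for `i ≥ k`.
-/

open Finset

theorem Finset.sum_range_mul_nonpos_of_antitoneOn {σ d : ℕ → ℝ} {n : ℕ}
    (hσ : AntitoneOn σ (Set.Iio n)) (hd : ∀ k < n, ∑ i ∈ range (k + 1), d i ≤ 0)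
    (hd_sum : ∑ i ∈ range n, d i = 0) :
    ∑ i ∈ range n, σ i * d i ≤ 0 := by
  have hparts := sum_range_by_parts σ d n
  simp only [smul_eq_mul, hd_sum, mul_zero, zero_sub] at hparts
  rw [hparts, neg_nonpos]
  refine sum_nonneg fun i hi => mul_nonneg_of_nonpos_of_nonpos ?_ (hd i (by grind))
  have hi : i + 1 < n := by grind
  exact sub_nonpos.2 (hσ (Set.mem_Iio.2 (by omega)) (Set.mem_Iio.2 hi) (Nat.le_succ i))

theorem Fin.sum_filter_val_lt {n k : ℕ} (hk : k ≤ n) (F : ℕ → ℝ) :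
    ∑ i ∈ univ.filter (fun i : Fin n => (i : ℕ) < k), F i = ∑ j ∈ range k, F j := by
  rw [sum_filter, Fin.sum_univ_eq_sum_range (fun j => if j < k then F j else 0),
    ← sum_range_add_sum_Ico _ hk]
  rw [sum_congr rfl fun j hj => if_pos (mem_range.1 hj),
    sum_eq_zero fun j hj => if_neg (by rw [mem_Ico] at hj; omega), add_zero]

theorem Fin.sum_mul_nonpos_of_antitone {n : ℕ} {g d : Fin n → ℝ} (hg : Antitone g)
    (hd : ∀ k ≤ n, ∑ i ∈ univ.filter (fun i : Fin n => (i : ℕ) < k), d i ≤ 0)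
    (hd_sum : ∑ i, d i = 0) :
    ∑ i, g i * d i ≤ 0 := by
  let extend : (Fin n → ℝ) → ℕ → ℝ := fun v j => if h : j < n then v ⟨j, h⟩ else 0
  have hextend : ∀ v : Fin n → ℝ, ∀ i : Fin n, extend v i = v i := fun v i => dif_pos i.isLt
  have hpartial : ∀ k ≤ n, ∑ i ∈ univ.filter (fun i : Fin n => (i : ℕ) < k), d i
      = ∑ j ∈ range k, extend d j := fun k hk => by
    simp only [← Fin.sum_filter_val_lt hk, hextend]
  have key := Finset.sum_range_mul_nonpos_of_antitoneOn (σ := extend g) (d := extend d) (n := n)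
    (fun a ha b hb hab => by
      rw [Set.mem_Iio] at ha hb
      simpa only [extend, dif_pos ha, dif_pos hb] using hg (Fin.mk_le_mk.2 hab))
    (fun k hk => hpartial (k + 1) hk ▸ hd (k + 1) hk)
    (by rwa [← hpartial n le_rfl, filter_true_of_mem fun i _ => i.isLt])
  simpa only [← Fin.sum_univ_eq_sum_range (fun j => extend g j * extend d j), hextend] using key

theorem ConvexOn.slope_le_slope_of_le_of_le {𝕜 : Type*} [Field 𝕜] [LinearOrder 𝕜]
    [IsStrictOrderedRing 𝕜] {s : Set 𝕜} {f : 𝕜 → 𝕜} (hf : ConvexOn 𝕜 s f) {x y x' y' : 𝕜}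
    (hx : x ∈ s) (hy : y ∈ s) (hx' : x' ∈ s) (hy' : y' ∈ s) (hxy : x ≠ y) (hxy' : x' ≠ y')
    (hxx' : x ≤ x') (hyy' : y ≤ y') :
    slope f x y ≤ slope f x' y' := by
  by_cases hx'y : x' = y
  · have hxy'' : x ≠ y' := fun h => hxy (le_antisymm (hx'y ▸ hxx') (h ▸ hyy'))
    calc slope f x y ≤ slope f x y' := hf.slope_mono hx ⟨hy, hxy.symm⟩ ⟨hy', hxy''.symm⟩ hyy'
      _ = slope f y' x := slope_comm _ _ _
      _ ≤ slope f y' x' := hf.slope_mono hy' ⟨hx, hxy''⟩ ⟨hx', hxy'⟩ hxx'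
      _ = slope f x' y' := slope_comm _ _ _
  · calc slope f x y = slope f y x := slope_comm _ _ _
      _ ≤ slope f y x' := hf.slope_mono hy ⟨hx, hxy⟩ ⟨hx', hx'y⟩ hxx'
      _ = slope f x' y := slope_comm _ _ _
      _ ≤ slope f x' y' := hf.slope_mono hx' ⟨hy, Ne.symm hx'y⟩ ⟨hy', hxy'.symm⟩ hyy'

theorem ConvexOn.sum_comp_le_sum_comp_of_partialSums_le {s : Set ℝ} {f : ℝ → ℝ}
    (hf : ConvexOn ℝ s f) {n : ℕ} {lam mu : Fin n → ℝ} (hlam : Antitone lam) (hmu : Antitone mu)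
    (hlam_mem : ∀ i, lam i ∈ s) (hmu_mem : ∀ i, mu i ∈ s)
    (hpartial : ∀ k ≤ n, ∑ i ∈ univ.filter (fun i : Fin n => (i : ℕ) < k), lam i ≤
      ∑ i ∈ univ.filter (fun i : Fin n => (i : ℕ) < k), mu i)
    (hsum : ∑ i, lam i = ∑ i, mu i) :
    ∑ i, f (lam i) ≤ ∑ i, f (mu i) := by
  have hslope : AntitoneOn (fun i => slope f (mu i) (lam i)) {i | lam i ≠ mu i} :=
    fun i hi j hj hij => hf.slope_le_slope_of_le_of_le (hmu_mem j) (hlam_mem j) (hmu_mem i)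
      (hlam_mem i) (Ne.symm hj) (Ne.symm hi) (hmu hij) (hlam hij)
  -- `slope f a a = 0` is junk, so the chord slopes are only antitone off the ties; extend them.
  obtain ⟨g, hg, hg_eq⟩ :=
    hslope.exists_antitone_extension (Set.toFinite _).bddBelow (Set.toFinite _).bddAbove
  have hterm : ∀ i, f (lam i) - f (mu i) = g i * (lam i - mu i) := by
    intro i
    by_cases hi : lam i = mu i
    · simp [hi]
    · rw [← hg_eq hi, mul_comm, ← smul_eq_mul, sub_smul_slope, vsub_eq_sub]
  have key := Fin.sum_mul_nonpos_of_antitone hg (d := fun i => lam i - mu i)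
    (fun k hk => by simpa only [sum_sub_distrib, sub_nonpos] using hpartial k hk)
    (by rw [sum_sub_distrib, hsum, sub_self])
  simp_rw [← hterm, sum_sub_distrib, sub_nonpos] at key
  exact key

theorem Finset.sum_le_sum_of_sum_max_sub_le {ι : Type*} [Fintype ι] (s : Finset ι)
    {x y : ι → ℝ} {c : ℝ} (hy_ge : ∀ i ∈ s, c ≤ y i) (hy_le : ∀ i ∉ s, y i ≤ c)
    (h : ∑ i, max (x i - c) 0 ≤ ∑ i, max (y i - c) 0) :
    ∑ i ∈ s, x i ≤ ∑ i ∈ s, y i := by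
  have hx : ∑ i ∈ s, (x i - c) ≤ ∑ i, max (x i - c) 0 :=
    calc ∑ i ∈ s, (x i - c) ≤ ∑ i ∈ s, max (x i - c) 0 := sum_le_sum fun i _ => le_max_left _ _
      _ ≤ ∑ i, max (x i - c) 0 :=
        sum_le_sum_of_subset_of_nonneg (subset_univ s) fun i _ _ => le_max_right _ _
  have hy : ∑ i, max (y i - c) 0 = ∑ i ∈ s, (y i - c) := by
    rw [← sum_subset (subset_univ s) fun i _ hi => max_eq_right (sub_nonpos.2 (hy_le i hi))]
    exact sum_congr rfl fun i hi => max_eq_left (sub_nonneg.2 (hy_ge i hi))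
  have := hx.trans (h.trans hy.le)
  rwa [sum_sub_distrib, sum_sub_distrib, sub_le_sub_iff_right] at this

/-- Hardy–Littlewood–Pólya: for decreasing real sequences `lam`, `mu` with equal
total sums, the partial sums of `lam` are dominated by those of `mu` iff
`∑ f (lam k) ≤ ∑ f (mu k)` for every convex function `f` on an interval containing
all the entries. -/
theorem hlp_majorization (n : ℕ) (lam mu : Fin n → ℝ)
    (hlam : Antitone lam) (hmu : Antitone mu)
    (hsum : ∑ i, lam i = ∑ i, mu i) :
    (∀ k : ℕ, k ≤ n →
      ∑ i ∈ Finset.univ.filter (fun i : Fin n => (i : ℕ) < k), lam i ≤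
      ∑ i ∈ Finset.univ.filter (fun i : Fin n => (i : ℕ) < k), mu i) ↔
    (∀ (a b : ℝ) (f : ℝ → ℝ), (∀ i, lam i ∈ Set.Icc a b) → (∀ i, mu i ∈ Set.Icc a b) →
      ConvexOn ℝ (Set.Icc a b) f → ∑ i, f (lam i) ≤ ∑ i, f (mu i)) := by
  refine ⟨fun hpartial a b f hlam_mem hmu_mem hf =>
    hf.sum_comp_le_sum_comp_of_partialSums_le hlam hmu hlam_mem hmu_mem hpartial hsum, ?_⟩
  intro hconvex k hk
  rcases Nat.eq_zero_or_pos k with rfl | hk_pos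
  · simp
  obtain ⟨a, ha⟩ := ((Set.finite_range lam).union (Set.finite_range mu)).bddBelow
  obtain ⟨b, hb⟩ := ((Set.finite_range lam).union (Set.finite_range mu)).bddAbove
  let i₀ : Fin n := ⟨k - 1, by omega⟩
  have hinge : ConvexOn ℝ (Set.Icc a b) (fun x => max (x - mu i₀) 0) :=
    ((convexOn_id (convex_Icc a b)).sub (concaveOn_const _ (convex_Icc a b))).sup
      (convexOn_const 0 (convex_Icc a b))
  have hmem : ∀ i : Fin n, i ∈ univ.filter (fun i : Fin n => (i : ℕ) < k) ↔ (i : ℕ) < k :=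
    fun i => by rw [mem_filter, and_iff_right (mem_univ i)]
  refine sum_le_sum_of_sum_max_sub_le _
    (fun i hi => hmu (Fin.mk_le_mk.2 (by rw [hmem] at hi; omega)))
    (fun i hi => hmu (Fin.mk_le_mk.2 (by rw [hmem] at hi; omega)))
    (hconvex a b _ (fun i => ⟨ha (.inl ⟨i, rfl⟩), hb (.inl ⟨i, rfl⟩)⟩)
      (fun i => ⟨ha (.inr ⟨i, rfl⟩), hb (.inr ⟨i, rfl⟩)⟩) hinge)
end
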